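/- arXiv:2603.29619 — 3 statements merged into one kernel-verified Lean document; each statement's English description precedes it below -/
import Mathlib

section
/- For the polytropic family with scaling function P, s(ρ,θ)=S(ρ/θ^{1/(γ-1)}) where S'(Z) = -(1/(γ-1))·(γP(Z)-P'(Z)Z)/Z², together with the corresponding p and e, satisfies Gibbs' relations θ ∂_θ s = ∂_θ e and θ ∂_ρ s = ∂_ρ e - p/ρ² for all ρ>0, θ>0. -/
open Real

/-!
With `Z = ρ / θ ^ (1/(γ-1))` one has `θ ^ (γ/(γ-1)) / ρ = θ / Z`, so the energy is
`e = θ/(γ-1) · P(Z)/Z`. By the chain rule, with `∂_θ Z = -Z/((γ-1)θ)` and `∂_ρ Z = Z/ρ`, both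
Gibbs relations become algebraic identities in `Z`, `P(Z)` and `P'(Z)`, which hold because
`γ/(γ-1) = 1 + 1/(γ-1)`.
-/

lemma rpow_div_sub_one_eq_mul_rpow {γ θ : ℝ} (hγ : γ ≠ 1) (hθ : 0 < θ) :
    θ ^ (γ / (γ - 1)) = θ * θ ^ (1 / (γ - 1)) := by
  have hexp : γ / (γ - 1) = 1 + 1 / (γ - 1) := by
    field_simp [sub_ne_zero.2 hγ]
    ring
  rw [hexp, rpow_add hθ, rpow_one]

lemma polytropic_energy_eq {γ : ℝ} (hγ : γ ≠ 1) (P : ℝ → ℝ) (ρ : ℝ) {θ : ℝ} (hθ : 0 < θ) :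
    θ ^ (γ / (γ - 1)) / ((γ - 1) * ρ) * P (ρ / θ ^ (1 / (γ - 1))) =
      θ / (γ - 1) * (P (ρ / θ ^ (1 / (γ - 1))) / (ρ / θ ^ (1 / (γ - 1)))) := by
  rw [rpow_div_sub_one_eq_mul_rpow hγ hθ]
  have : θ ^ (1 / (γ - 1)) ≠ 0 := by positivity
  field_simp

lemma hasDerivAt_div_rpow (ρ β : ℝ) {θ : ℝ} (hθ : 0 < θ) :
    HasDerivAt (fun t => ρ / t ^ β) (-β * (ρ / θ ^ β) / θ) θ := by
  refine ((hasDerivAt_const θ ρ).div (hasDerivAt_rpow_const (p := β) (Or.inl hθ.ne'))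
    (rpow_pos_of_pos hθ β).ne').congr_deriv ?_
  rw [rpow_sub_one hθ.ne']
  field_simp
  ring

lemma HasDerivAt.comp_div_rpow {f : ℝ → ℝ} {f' : ℝ} (ρ β : ℝ) {θ : ℝ} (hθ : 0 < θ)
    (hf : HasDerivAt f f' (ρ / θ ^ β)) :
    HasDerivAt (fun t => f (ρ / t ^ β)) (f' * (-β * (ρ / θ ^ β) / θ)) θ :=
  hf.comp θ (hasDerivAt_div_rpow ρ β hθ)

lemma HasDerivAt.comp_div_const {f : ℝ → ℝ} {f' : ℝ} (ρ c : ℝ) (hf : HasDerivAt f f' (ρ / c)) :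
    HasDerivAt (fun r => f (r / c)) (f' * (1 / c)) ρ :=
  hf.comp ρ ((hasDerivAt_id' ρ).div_const c)

lemma HasDerivAt.div_id {f : ℝ → ℝ} {f' z : ℝ} (hf : HasDerivAt f f' z) (hz : z ≠ 0) :
    HasDerivAt (fun x => f x / x) ((f' * z - f z) / z ^ 2) z :=
  (hf.div (hasDerivAt_id' z) hz).congr_deriv (by ring)

/-- Gibbs' relations for the polytropic family with general scaling function `P`
and entropy `s(ρ,θ) = S(ρ/θ^{1/(γ-1)})` where
`S'(Z) = -(1/(γ-1)) (γ P(Z) - P'(Z) Z)/Z²`. -/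
theorem gibbs_polytropic (γ : ℝ) (hγ : 1 < γ) (P S : ℝ → ℝ)
    (hP : ∀ Z : ℝ, 0 < Z → DifferentiableAt ℝ P Z)
    (hS : ∀ Z : ℝ, 0 < Z →
      HasDerivAt S (-(1 / (γ - 1)) * (γ * P Z - deriv P Z * Z) / Z ^ 2) Z)
    (p e s : ℝ → ℝ → ℝ)
    (hp : ∀ ρ θ, 0 < ρ → 0 < θ →
      p ρ θ = θ ^ (γ / (γ - 1)) * P (ρ / θ ^ (1 / (γ - 1))))
    (he : ∀ ρ θ, 0 < ρ → 0 < θ →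
      e ρ θ = θ ^ (γ / (γ - 1)) / ((γ - 1) * ρ) * P (ρ / θ ^ (1 / (γ - 1))))
    (hs : ∀ ρ θ, 0 < ρ → 0 < θ → s ρ θ = S (ρ / θ ^ (1 / (γ - 1)))) :
    ∀ ρ θ : ℝ, 0 < ρ → 0 < θ →
      θ * deriv (fun t => s ρ t) θ = deriv (fun t => e ρ t) θ ∧
      θ * deriv (fun r => s r θ) ρ = deriv (fun r => e r θ) ρ - p ρ θ / ρ ^ 2 := by
  intro ρ θ hρ hθ
  have hγ₁ : γ - 1 ≠ 0 := sub_ne_zero.2 hγ.ne'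
  have hZ : 0 < ρ / θ ^ (1 / (γ - 1)) := by positivity
  have hQ := (hP _ hZ).hasDerivAt.div_id hZ.ne'
  rw [Set.EqOn.deriv (fun t ht => hs ρ t hρ ht) isOpen_Ioi hθ,
    Set.EqOn.deriv (fun t ht => (he ρ t hρ ht).trans (polytropic_energy_eq hγ.ne' P ρ ht))
      isOpen_Ioi hθ,
    Set.EqOn.deriv (fun r hr => hs r θ hr hθ) isOpen_Ioi hρ,
    Set.EqOn.deriv (fun r hr => (he r θ hr hθ).trans (polytropic_energy_eq hγ.ne' P r hθ))
      isOpen_Ioi hρ,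
    ((hS _ hZ).comp_div_rpow ρ _ hθ).deriv,
    (((hasDerivAt_id' θ).div_const (γ - 1)).fun_mul (hQ.comp_div_rpow ρ _ hθ)).deriv,
    ((hS _ hZ).comp_div_const ρ _).deriv,
    ((hQ.comp_div_const ρ _).const_mul (θ / (γ - 1))).deriv,
    hp ρ θ hρ hθ, rpow_div_sub_one_eq_mul_rpow hγ.ne' hθ]
  constructor <;> field_simp <;> ring
end

section
/- The internal energy (ρ,S) ↦ ρ^γ exp(S/(c_v ρ)) is strictly convex on the open set {ρ>0, S∈ℝ}: its Hessian is positive definite at every point. -/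
/-!
For `ρ > 0`, `H = exp ψ` with `ψ = γ log ρ + k S / ρ`, `k = 1 / c_v`. Along the line
`t ↦ (ρ + t a, S + t b)` the ratio `(S + t b) / (ρ + t a)` has derivative
`(b ρ - S a) / (ρ + t a)²`, as `b (ρ + t a) - a (S + t b)` does not depend on `t`. Hence the
second derivative `(ψ'' + ψ'²) e^ψ` at `t = 0` is `ρ⁻⁴ e^ψ` times the quadratic form
`γ (γ - 1) X² + 2 k (γ - 1) X Y + k² Y²` in `X = a ρ`, `Y = b ρ - S a`. Since `γ` times this
form is `(γ - 1) (γ X + k Y)² + (k Y)²`, it is positive definite when `γ > 1` and `k ≠ 0`.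
A continuous function with positive second derivative along every line through a convex set
is strictly convex.
-/

open Real Filter Topology

theorem strictConvexOn_of_iteratedDeriv_two_line_pos {E : Type*} [AddCommGroup E] [Module ℝ E]
    [TopologicalSpace E] [IsTopologicalAddGroup E] [ContinuousSMul ℝ E] {s : Set E} {f : E → ℝ}
    (hs : Convex ℝ s) (hf : ContinuousOn f s)
    (hf'' : ∀ x ∈ s, ∀ v ≠ 0, 0 < iteratedDeriv 2 (fun t : ℝ => f (x + t • v)) 0) :
    StrictConvexOn ℝ s f := by
  refine ⟨hs, fun x hx y hy hxy a b ha hb hab => ?_⟩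
  let g : ℝ → ℝ := fun t => f (AffineMap.lineMap x y t)
  have hg : StrictConvexOn ℝ (AffineMap.lineMap x y ⁻¹' s) g := by
    refine strictConvexOn_of_deriv2_pos (hs.affine_preimage _)
      (hf.comp AffineMap.lineMap_continuous.continuousOn fun _ h => h) fun t ht => ?_
    have hshift : (fun u : ℝ => f (AffineMap.lineMap x y t + u • (y - x))) =
        fun u => g (u + t) := by
      ext u
      simp only [g, AffineMap.lineMap_apply_module]
      congr 1
      module
    have hpos := hf'' _ (interior_subset (s := AffineMap.lineMap x y ⁻¹' s) ht) (y - x)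
      (sub_ne_zero.2 hxy.symm)
    rw [hshift, iteratedDeriv_comp_add_const] at hpos
    simpa only [zero_add, iteratedDeriv_eq_iterate] using hpos
  obtain rfl : a = 1 - b := by linarith
  simpa [g, AffineMap.lineMap_apply_module] using
    hg.2 (x := 0) (y := 1) (by simpa using hx) (by simpa using hy) zero_ne_one ha hb hab

theorem iteratedDeriv_two_exp_comp {ψ ψ' : ℝ → ℝ} {x ψ'' : ℝ}
    (hψ : ∀ᶠ t in 𝓝 x, HasDerivAt ψ (ψ' t) t) (hψ' : HasDerivAt ψ' ψ'' x) :
    iteratedDeriv 2 (fun t => exp (ψ t)) x = (ψ'' + ψ' x ^ 2) * exp (ψ x) := by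
  have hderiv : deriv (fun t => exp (ψ t)) =ᶠ[𝓝 x] fun t => ψ' t * exp (ψ t) := by
    filter_upwards [hψ] with t ht
    rw [ht.exp.deriv, mul_comm]
  rw [iteratedDeriv_succ, iteratedDeriv_one, hderiv.deriv_eq]
  exact ((hψ'.mul hψ.self_of_nhds.exp).congr_deriv (by ring)).deriv

noncomputable def logInternalEnergy (γ k ρ S : ℝ) : ℝ := γ * log ρ + k * S / ρ

theorem rpow_mul_exp_eq_exp_logInternalEnergy (γ k : ℝ) {ρ : ℝ} (hρ : 0 < ρ) (S : ℝ) :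
    ρ ^ γ * exp (S / (k⁻¹ * ρ)) = exp (logInternalEnergy γ k ρ S) := by
  rw [rpow_def_of_pos hρ, ← exp_add, logInternalEnergy, div_mul_eq_div_div_swap,
    div_inv_eq_mul, mul_div_assoc, mul_comm γ, mul_comm (S / ρ)]

section Line

variable (γ k ρ S a b : ℝ)

theorem hasDerivAt_logInternalEnergy_line {t : ℝ} (ht : ρ + t * a ≠ 0) :
    HasDerivAt (fun t => logInternalEnergy γ k (ρ + t * a) (S + t * b))
      (γ * a / (ρ + t * a) + k * (b * ρ - S * a) / (ρ + t * a) ^ 2) t := by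
  have hr : HasDerivAt (fun t => ρ + t * a) a t := by
    simpa using ((hasDerivAt_id t).mul_const a).const_add ρ
  have hs : HasDerivAt (fun t => k * (S + t * b)) (k * b) t := by
    simpa using (((hasDerivAt_id t).mul_const b).const_add S).const_mul k
  refine (((hr.log ht).const_mul γ).fun_add (hs.fun_div hr ht)).congr_deriv ?_
  field_simp
  ring

theorem hasDerivAt_deriv_logInternalEnergy_line (hρ : ρ ≠ 0) :
    HasDerivAt (fun t => γ * a / (ρ + t * a) + k * (b * ρ - S * a) / (ρ + t * a) ^ 2)
      (-(γ * a ^ 2) / ρ ^ 2 - 2 * k * a * (b * ρ - S * a) / ρ ^ 3) 0 := by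
  have hr : HasDerivAt (fun t => ρ + t * a) a 0 := by
    simpa using ((hasDerivAt_id (0 : ℝ)).mul_const a).const_add ρ
  have hρ' : ρ + 0 * a ≠ 0 := by simpa using hρ
  refine (((hasDerivAt_const 0 (γ * a)).fun_div hr hρ').fun_add
    ((hasDerivAt_const 0 (k * (b * ρ - S * a))).fun_div (hr.fun_pow 2)
      (pow_ne_zero 2 hρ'))).congr_deriv ?_
  field_simp
  ring

theorem iteratedDeriv_two_exp_logInternalEnergy_line (hρ : ρ ≠ 0) :
    iteratedDeriv 2 (fun t => exp (logInternalEnergy γ k (ρ + t * a) (S + t * b))) 0 =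
      (γ * (γ - 1) * (a * ρ) ^ 2 + 2 * k * (γ - 1) * (a * ρ) * (b * ρ - S * a)
        + k ^ 2 * (b * ρ - S * a) ^ 2) / ρ ^ 4 * exp (logInternalEnergy γ k ρ S) := by
  have hne : ∀ᶠ t in 𝓝 (0 : ℝ), ρ + t * a ≠ 0 :=
    ContinuousAt.eventually_ne (by fun_prop) (by simpa using hρ)
  rw [iteratedDeriv_two_exp_comp
    (hne.mono fun t ht => hasDerivAt_logInternalEnergy_line γ k ρ S a b ht)
    (hasDerivAt_deriv_logInternalEnergy_line γ k ρ S a b hρ)]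
  simp only [zero_mul, add_zero]
  congr 1
  field_simp
  ring

end Line

theorem quadratic_form_pos {γ k X Y : ℝ} (hγ : 1 < γ) (hk : k ≠ 0) (hXY : X ≠ 0 ∨ Y ≠ 0) :
    0 < γ * (γ - 1) * X ^ 2 + 2 * k * (γ - 1) * X * Y + k ^ 2 * Y ^ 2 := by
  have hγ1 : 0 < γ - 1 := sub_pos.2 hγ
  suffices 0 < (γ - 1) * (γ * X + k * Y) ^ 2 + (k * Y) ^ 2 by nlinarith
  by_cases hY : Y = 0
  · have hX : X ≠ 0 := hXY.resolve_right (not_not.2 hY)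
    subst hY
    have : γ * X ≠ 0 := mul_ne_zero (by positivity) hX
    simp only [mul_zero, add_zero, ne_eq, OfNat.ofNat_ne_zero, not_false_eq_true, zero_pow]
    positivity
  · have : k * Y ≠ 0 := mul_ne_zero hk hY
    positivity

theorem iteratedDeriv_two_exp_logInternalEnergy_line_pos {γ k : ℝ} (hγ : 1 < γ) (hk : k ≠ 0)
    {ρ : ℝ} (hρ : 0 < ρ) (S : ℝ) {a b : ℝ} (hab : (a, b) ≠ 0) :
    0 < iteratedDeriv 2 (fun t => exp (logInternalEnergy γ k (ρ + t * a) (S + t * b))) 0 := by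
  rw [iteratedDeriv_two_exp_logInternalEnergy_line _ _ _ _ _ _ hρ.ne']
  refine mul_pos (div_pos (quadratic_form_pos hγ hk ?_) (by positivity)) (exp_pos _)
  by_cases ha : a = 0
  · have hb : b ≠ 0 := fun hb => hab (by rw [ha, hb, Prod.mk_zero_zero])
    simp [ha, hb, hρ.ne']
  · exact Or.inl (mul_ne_zero ha hρ.ne')

/-- The internal energy `(ρ,S) ↦ ρ^γ exp(S/(c_v ρ))` is strictly convex on the open
set `{ρ > 0}`, and its Hessian is positive definite at every point: the second
derivative along any nonzero direction is strictly positive. -/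
theorem internal_energy_strictly_convex (γ cv : ℝ) (hγ : 1 < γ) (hcv : cv = 1 / (γ - 1))
    (H : ℝ → ℝ → ℝ) (hH : ∀ ρ S : ℝ, 0 < ρ → H ρ S = ρ ^ γ * Real.exp (S / (cv * ρ))) :
    StrictConvexOn ℝ {q : ℝ × ℝ | 0 < q.1} (fun q => H q.1 q.2) ∧
    ∀ ρ S : ℝ, 0 < ρ → ∀ v : ℝ × ℝ, v ≠ 0 →
      0 < iteratedDeriv 2 (fun t : ℝ => H (ρ + t * v.1) (S + t * v.2)) 0 := by
  have hk : cv⁻¹ ≠ 0 := by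
    rw [hcv, one_div, inv_inv]
    linarith
  have hH_exp : ∀ ρ S, 0 < ρ → H ρ S = exp (logInternalEnergy γ cv⁻¹ ρ S) := fun ρ S hρ => by
    rw [hH ρ S hρ, ← rpow_mul_exp_eq_exp_logInternalEnergy γ cv⁻¹ hρ, inv_inv]
  have hline : ∀ ρ S : ℝ, 0 < ρ → ∀ v : ℝ × ℝ, v ≠ 0 →
      0 < iteratedDeriv 2 (fun t : ℝ => H (ρ + t * v.1) (S + t * v.2)) 0 := by
    intro ρ S hρ v hv
    have hpos : ∀ᶠ t in 𝓝 (0 : ℝ), 0 < ρ + t * v.1 :=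
      continuousAt_const.eventually_lt (by fun_prop) (by simpa using hρ)
    have heq : (fun t : ℝ => H (ρ + t * v.1) (S + t * v.2)) =ᶠ[𝓝 0]
        fun t => exp (logInternalEnergy γ cv⁻¹ (ρ + t * v.1) (S + t * v.2)) :=
      hpos.mono fun t ht => hH_exp _ _ ht
    rw [heq.iteratedDeriv_eq]
    exact iteratedDeriv_two_exp_logInternalEnergy_line_pos hγ hk hρ S hv
  have hcont : ContinuousOn (fun q : ℝ × ℝ => H q.1 q.2) {q | 0 < q.1} := by
    refine ContinuousOn.congr ?_ fun q hq => hH_exp q.1 q.2 hq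
    unfold logInternalEnergy
    fun_prop (disch := exact fun q hq => hq.ne')
  have hconvex : Convex ℝ {q : ℝ × ℝ | 0 < q.1} :=
    convex_halfSpace_gt (LinearMap.fst ℝ ℝ ℝ).isLinear 0
  exact ⟨strictConvexOn_of_iteratedDeriv_two_line_pos hconvex hcont
    fun x hx v hv => hline x.1 x.2 hx v hv, hline⟩
end

section
/- The extended internal energy function (ρ,S) ↦ ρ^γ exp(S/(c_v ρ)) for ρ>0, equal to 0 when ρ=0 and S≤0, and +∞ otherwise, is convex and lower semicontinuous on ℝ² with values in [0,∞]. -/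
/-!
For `ρ > 0` one has `ρ^γ exp(S/(c_v ρ)) = (ρ exp(S/(γ c_v ρ)))^γ`: a convex nondecreasing power
of the perspective of a convex exponential, hence convex. On the ray `{ρ = 0, S ≤ 0}` the same
formula vanishes, and mixing a point with a ray point only lowers `S`, so homogeneity of degree
`γ ≥ 1` gives the convexity inequality there too. Lower semicontinuity is continuity where `ρ > 0`,
is trivial where `h = 0` or `h = ∞` nearby, and at `(0, S)` with `S > 0` follows from
`ρ^γ exp(b/ρ) → ∞` as `ρ → 0⁺`.
-/

open Real ENNReal Set Filter Topology

section ConvexOn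

variable {E : Type*} [AddCommGroup E] [Module ℝ E]

theorem ConvexOn.perspective {f : E → ℝ} (hf : ConvexOn ℝ univ f) :
    ConvexOn ℝ (Ioi 0 ×ˢ univ) fun p : ℝ × E => p.1 * f (p.1⁻¹ • p.2) := by
  refine ⟨(convex_Ioi 0).prod convex_univ, ?_⟩
  rintro ⟨ρ₁, x₁⟩ ⟨hρ₁ : 0 < ρ₁, -⟩ ⟨ρ₂, x₂⟩ ⟨hρ₂ : 0 < ρ₂, -⟩ a b ha hb hab
  simp only [Prod.smul_mk, Prod.mk_add_mk, smul_eq_mul]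
  set ρ := a * ρ₁ + b * ρ₂
  have hρ : 0 < ρ := by
    rcases ha.eq_or_lt with rfl | ha
    · simp_all [ρ]
    · positivity
  have hw : a * ρ₁ / ρ + b * ρ₂ / ρ = 1 := by rw [← add_div, div_self hρ.ne']
  have hcomb : ρ⁻¹ • (a • x₁ + b • x₂)
      = (a * ρ₁ / ρ) • (ρ₁⁻¹ • x₁) + (b * ρ₂ / ρ) • (ρ₂⁻¹ • x₂) := by
    simp only [smul_smul, smul_add]
    congr 2 <;> field_simp
  calc ρ * f (ρ⁻¹ • (a • x₁ + b • x₂))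
      ≤ ρ * (a * ρ₁ / ρ * f (ρ₁⁻¹ • x₁) + b * ρ₂ / ρ * f (ρ₂⁻¹ • x₂)) := by
        rw [hcomb]
        gcongr
        exact hf.2 trivial trivial (by positivity) (by positivity) hw
    _ = a • (ρ₁ * f (ρ₁⁻¹ • x₁)) + b • (ρ₂ * f (ρ₂⁻¹ • x₂)) := by
        simp only [smul_eq_mul]; field_simp

theorem ConvexOn.rpow {s : Set E} {f : E → ℝ} {p : ℝ} (hf : ConvexOn ℝ s f)
    (hf₀ : ∀ x ∈ s, 0 ≤ f x) (hp : 1 ≤ p) :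
    ConvexOn ℝ s fun x => f x ^ p := by
  refine ⟨hf.1, fun x hx y hy a b ha hb hab => ?_⟩
  calc f (a • x + b • y) ^ p ≤ (a • f x + b • f y) ^ p :=
        rpow_le_rpow (hf₀ _ (hf.1 hx hy ha hb hab)) (hf.2 hx hy ha hb hab) (by linarith)
    _ ≤ a • f x ^ p + b • f y ^ p := (convexOn_rpow hp).2 (hf₀ x hx) (hf₀ y hy) ha hb hab

end ConvexOn

open Classical in
noncomputable def extendByTop {E : Type*} (s : Set E) (f : E → ℝ) (x : E) : ℝ≥0∞ :=
  if x ∈ s then ENNReal.ofReal (f x) else ∞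

section extendByTop

variable {E : Type*} {s : Set E} {f : E → ℝ} {x : E}

@[simp]
theorem extendByTop_of_mem (hx : x ∈ s) : extendByTop s f x = ENNReal.ofReal (f x) := by
  simp [extendByTop, hx]

@[simp]
theorem extendByTop_of_notMem (hx : x ∉ s) : extendByTop s f x = ∞ := by
  simp [extendByTop, hx]

theorem ConvexOn.extendByTop_le [AddCommGroup E] [Module ℝ E] (hf : ConvexOn ℝ s f)
    (x y : E) {t : ℝ} (ht₀ : 0 ≤ t) (ht₁ : t ≤ 1) :
    extendByTop s f (t • x + (1 - t) • y)
      ≤ ENNReal.ofReal t * extendByTop s f x + ENNReal.ofReal (1 - t) * extendByTop s f y := by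
  rcases ht₀.eq_or_lt with rfl | ht₀
  · simp
  rcases ht₁.eq_or_lt with rfl | ht₁
  · simp
  by_cases hx : x ∈ s
  · by_cases hy : y ∈ s
    · rw [extendByTop_of_mem hx, extendByTop_of_mem hy,
        extendByTop_of_mem (hf.1 hx hy ht₀.le (by linarith) (by ring)),
        ← ENNReal.ofReal_mul ht₀.le, ← ENNReal.ofReal_mul (by linarith)]
      exact (ENNReal.ofReal_le_ofReal (hf.2 hx hy ht₀.le (by linarith) (by ring))).trans
        ENNReal.ofReal_add_le
    · simp [hy, ht₁]
  · simp [hx, ht₀]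

end extendByTop

noncomputable def internalEnergy (γ cv : ℝ) (p : ℝ × ℝ) : ℝ :=
  p.1 ^ γ * exp (p.2 / (cv * p.1))

def internalEnergyDomain : Set (ℝ × ℝ) :=
  {p | 0 < p.1 ∨ p.1 = 0 ∧ p.2 ≤ 0}

section internalEnergy

variable {γ cv : ℝ}

theorem internalEnergy_nonneg {p : ℝ × ℝ} (hp : 0 ≤ p.1) : 0 ≤ internalEnergy γ cv p := by
  unfold internalEnergy; positivity

theorem internalEnergy_of_fst_eq_zero (hγ : γ ≠ 0) {p : ℝ × ℝ} (hp : p.1 = 0) :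
    internalEnergy γ cv p = 0 := by
  simp [internalEnergy, hp, zero_rpow hγ]

theorem internalEnergy_smul {t : ℝ} (ht : 0 < t) {p : ℝ × ℝ} (hp : 0 ≤ p.1) :
    internalEnergy γ cv (t • p) = t ^ γ * internalEnergy γ cv p := by
  simp only [internalEnergy, Prod.smul_fst, Prod.smul_snd, smul_eq_mul,
    mul_rpow ht.le hp, mul_left_comm cv, mul_div_mul_left _ _ ht.ne', mul_assoc]

theorem internalEnergy_mono_snd (hcv : 0 < cv) {ρ S S' : ℝ} (hρ : 0 < ρ) (hS : S ≤ S') :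
    internalEnergy γ cv (ρ, S) ≤ internalEnergy γ cv (ρ, S') := by
  unfold internalEnergy; gcongr

theorem internalEnergy_eq_rpow (hγ : γ ≠ 0) {p : ℝ × ℝ} (hp : 0 < p.1) :
    internalEnergy γ cv p = (p.1 * exp ((γ * cv)⁻¹ * (p.1⁻¹ * p.2))) ^ γ := by
  rw [mul_rpow hp.le (exp_pos _).le, ← exp_mul, internalEnergy]
  congr 2
  rcases eq_or_ne cv 0 with rfl | hcv
  · simp
  · field_simp

theorem convexOn_internalEnergy_pos (hγ : 1 ≤ γ) :
    ConvexOn ℝ (Ioi 0 ×ˢ univ) (internalEnergy γ cv) := by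
  have hexp : ConvexOn ℝ univ fun S : ℝ => exp ((γ * cv)⁻¹ * S) :=
    convexOn_exp.comp_linearMap (LinearMap.mulLeft ℝ (γ * cv)⁻¹)
  refine (hexp.perspective.rpow (fun p hp => mul_nonneg (le_of_lt hp.1) (exp_pos _).le)
    hγ).congr fun p hp => ?_
  exact (internalEnergy_eq_rpow (by linarith : 0 < γ).ne' hp.1).symm

theorem internalEnergy_smul_add_le (hγ : 1 ≤ γ) (hcv : 0 < cv) {p q : ℝ × ℝ} (hp : 0 < p.1)
    (hq₁ : q.1 = 0) (hq₂ : q.2 ≤ 0) {a b : ℝ} (ha₀ : 0 < a) (ha₁ : a ≤ 1) (hb : 0 ≤ b) :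
    internalEnergy γ cv (a • p + b • q) ≤ a * internalEnergy γ cv p := by
  calc internalEnergy γ cv (a • p + b • q)
      = internalEnergy γ cv (a * p.1, a * p.2 + b * q.2) := by congr 1; ext <;> simp [hq₁]
    _ ≤ internalEnergy γ cv (a * p.1, a * p.2) :=
        internalEnergy_mono_snd hcv (by positivity) (by nlinarith)
    _ = a ^ γ * internalEnergy γ cv p := internalEnergy_smul ha₀ hp.le
    _ ≤ a * internalEnergy γ cv p := by
        gcongr
        · exact internalEnergy_nonneg hp.le
        · exact rpow_le_self_of_le_one ha₀.le ha₁ hγ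

theorem convex_internalEnergyDomain : Convex ℝ internalEnergyDomain := by
  refine convex_iff_forall_pos.2 fun x hx y hy a b ha hb hab => ?_
  have fst_nonneg : ∀ p ∈ internalEnergyDomain, 0 ≤ p.1 := by
    rintro p (hp | ⟨hp, -⟩) <;> linarith
  by_cases hpos : 0 < x.1 ∨ 0 < y.1
  · left
    have := fst_nonneg x hx
    have := fst_nonneg y hy
    simp only [Prod.fst_add, Prod.smul_fst, smul_eq_mul]
    rcases hpos with h | h <;> positivity
  · push Not at hpos
    obtain ⟨hx₁, hx₂⟩ : x.1 = 0 ∧ x.2 ≤ 0 := hx.resolve_left hpos.1.not_gt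
    obtain ⟨hy₁, hy₂⟩ : y.1 = 0 ∧ y.2 ≤ 0 := hy.resolve_left hpos.2.not_gt
    right
    simp only [Prod.fst_add, Prod.smul_fst, Prod.snd_add, Prod.smul_snd, smul_eq_mul, hx₁, hy₁]
    constructor
    · ring
    · nlinarith

theorem convexOn_internalEnergy (hγ : 1 ≤ γ) (hcv : 0 < cv) :
    ConvexOn ℝ internalEnergyDomain (internalEnergy γ cv) := by
  refine convexOn_iff_forall_pos.2 ⟨convex_internalEnergyDomain, ?_⟩
  have hγ₀ : γ ≠ 0 := by positivity
  intro x hx y hy a b ha hb hab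
  simp only [smul_eq_mul]
  rcases hx with hx | ⟨hx₁, hx₂⟩ <;> rcases hy with hy | ⟨hy₁, hy₂⟩
  · exact (convexOn_internalEnergy_pos hγ).2 ⟨hx, trivial⟩ ⟨hy, trivial⟩ ha.le hb.le hab
  · rw [internalEnergy_of_fst_eq_zero hγ₀ hy₁, mul_zero, add_zero]
    exact internalEnergy_smul_add_le hγ hcv hx hy₁ hy₂ ha (by linarith) hb.le
  · rw [internalEnergy_of_fst_eq_zero hγ₀ hx₁, mul_zero, zero_add, add_comm]
    exact internalEnergy_smul_add_le hγ hcv hy hx₁ hx₂ hb (by linarith) ha.le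
  · simp [internalEnergy_of_fst_eq_zero hγ₀, hx₁, hy₁]

theorem tendsto_internalEnergy_nhdsGT_zero (hcv : 0 < cv) {S : ℝ} (hS : 0 < S) :
    Tendsto (fun ρ => internalEnergy γ cv (ρ, S)) (𝓝[>] 0) atTop := by
  refine ((tendsto_exp_mul_div_rpow_atTop γ (S / cv) (by positivity)).comp
    tendsto_inv_nhdsGT_zero).congr' ?_
  filter_upwards [self_mem_nhdsWithin] with ρ (hρ : 0 < ρ)
  rw [Function.comp_apply, inv_rpow hρ.le, div_inv_eq_mul, internalEnergy]
  ring_nf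

theorem eventually_lt_extendByTop_internalEnergy (hcv : 0 < cv) {S₀ : ℝ} (hS₀ : 0 < S₀)
    {c : ℝ≥0∞} (hc : c < ∞) :
    ∀ᶠ p in 𝓝 (0, S₀), c < extendByTop internalEnergyDomain (internalEnergy γ cv) p := by
  have hlarge : ∀ᶠ ρ in 𝓝[>] 0, c < ENNReal.ofReal (internalEnergy γ cv (ρ, S₀ / 2)) :=
    (ENNReal.tendsto_ofReal_atTop.comp
      (tendsto_internalEnergy_nhdsGT_zero hcv (half_pos hS₀))).eventually_const_lt hc
  filter_upwards [continuousAt_fst.eventually (eventually_nhdsWithin_iff.1 hlarge),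
    continuousAt_snd.eventually (lt_mem_nhds (half_lt_self hS₀))] with p hp₁ hp₂
  by_cases hp : 0 < p.1
  · rw [extendByTop_of_mem (s := internalEnergyDomain) (Or.inl hp)]
    exact (hp₁ hp).trans_le (ofReal_le_ofReal (internalEnergy_mono_snd hcv hp hp₂.le))
  · rw [extendByTop_of_notMem]
    · exact hc
    · rintro (h | ⟨-, h⟩) <;> linarith

theorem lowerSemicontinuous_extendByTop_internalEnergy (hγ : γ ≠ 0) (hcv : 0 < cv) :
    LowerSemicontinuous (extendByTop internalEnergyDomain (internalEnergy γ cv)) := by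
  rintro ⟨ρ₀, S₀⟩ c hc
  rcases lt_trichotomy ρ₀ 0 with hρ₀ | rfl | hρ₀
  · have hout : ∀ᶠ p in 𝓝 (ρ₀, S₀), p ∉ internalEnergyDomain := by
      filter_upwards [continuousAt_fst.eventually (gt_mem_nhds hρ₀)] with p hp
      rintro (h | ⟨h, -⟩) <;> linarith
    filter_upwards [hout] with p hp
    rw [extendByTop_of_notMem hp]
    exact hc.trans_le le_top
  · rcases le_or_gt S₀ 0 with hS₀ | hS₀
    · rw [extendByTop_of_mem (s := internalEnergyDomain) (Or.inr ⟨rfl, hS₀⟩),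
        internalEnergy_of_fst_eq_zero hγ rfl, ofReal_zero] at hc
      exact (ENNReal.not_lt_zero hc).elim
    exact eventually_lt_extendByTop_internalEnergy hcv hS₀ (hc.trans_le le_top)
  · have hev : (fun p => ENNReal.ofReal (internalEnergy γ cv p)) =ᶠ[𝓝 (ρ₀, S₀)]
        extendByTop internalEnergyDomain (internalEnergy γ cv) := by
      filter_upwards [continuousAt_fst.eventually (lt_mem_nhds hρ₀)] with p hp
      rw [extendByTop_of_mem (s := internalEnergyDomain) (Or.inl hp)]
    have hcont : ContinuousAt (internalEnergy γ cv) (ρ₀, S₀) :=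
      (continuousAt_fst.rpow_const (Or.inl hρ₀.ne')).mul
        (continuousAt_snd.div (continuousAt_const.mul continuousAt_fst)
          (mul_pos hcv hρ₀).ne').rexp
    exact ((ENNReal.continuous_ofReal.continuousAt.comp hcont).congr hev).lowerSemicontinuousAt
      c hc

end internalEnergy

/-- The extended internal energy `h(ρ,S) = ρ^γ exp(S/(c_v ρ))` for `ρ > 0`,
`h(0,S) = 0` for `S ≤ 0`, `h = ∞` otherwise, is convex and lower semicontinuous
on `ℝ²` with values in `[0,∞]`. -/
theorem internal_energy_convex_lsc (γ cv : ℝ) (hγ : 1 < γ) (hcv : cv = 1 / (γ - 1))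
    (h : ℝ × ℝ → ℝ≥0∞)
    (hh1 : ∀ ρ S : ℝ, 0 < ρ →
      h (ρ, S) = ENNReal.ofReal (ρ ^ γ * Real.exp (S / (cv * ρ))))
    (hh2 : ∀ S : ℝ, S ≤ 0 → h (0, S) = 0)
    (hh3 : ∀ ρ S : ℝ, ¬ 0 < ρ → ¬ (ρ = 0 ∧ S ≤ 0) → h (ρ, S) = ∞) :
    (∀ x y : ℝ × ℝ, ∀ t : ℝ, 0 ≤ t → t ≤ 1 →
      h (t • x + (1 - t) • y) ≤ ENNReal.ofReal t * h x + ENNReal.ofReal (1 - t) * h y) ∧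
    LowerSemicontinuous h := by
  have hγ₀ : γ ≠ 0 := by positivity
  have hcv₀ : 0 < cv := by rw [hcv]; exact one_div_pos.2 (sub_pos.2 hγ)
  obtain rfl : h = extendByTop internalEnergyDomain (internalEnergy γ cv) := by
    funext ⟨ρ, S⟩
    by_cases hρ : 0 < ρ
    · rw [hh1 ρ S hρ, extendByTop_of_mem (s := internalEnergyDomain) (Or.inl hρ), internalEnergy]
    by_cases hS : ρ = 0 ∧ S ≤ 0
    · obtain ⟨rfl, hS⟩ := hS
      rw [hh2 S hS, extendByTop_of_mem (s := internalEnergyDomain) (Or.inr ⟨rfl, hS⟩),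
        internalEnergy_of_fst_eq_zero hγ₀ rfl, ofReal_zero]
    · rw [hh3 ρ S hρ hS, extendByTop_of_notMem fun hmem => hmem.elim hρ hS]
  exact ⟨fun x y t ht₀ ht₁ => (convexOn_internalEnergy hγ.le hcv₀).extendByTop_le x y ht₀ ht₁,
    lowerSemicontinuous_extendByTop_internalEnergy hγ₀ hcv₀⟩
end
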